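/- Let (⋯ →f₁→ X₁ →f₀→ X₀) be an inverse sequence of complete metric spaces and uniformly continuous maps with inverse limit L, and suppose the sequence is Cauchy: for each i and each ε > 0 there exists k ≥ i such that for every j ≥ k the set fᵏᵢ(X_k) is contained in the ε-neighborhood of fʲᵢ(X_j) in Xᵢ. Then the sequence converges: for each i and each ε > 0, for all but finitely many j the set fʲᵢ(X_j) is contained in the ε-neighborhood of f^∞ᵢ(L) in Xᵢ. In particular, if every Xᵢ is nonempty, then L is nonempty. -/

import Mathlib

/-- An inverse sequence of metric spaces `⋯ → X₂ → X₁ → X₀`, presented by its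
compatible composite bonding maps `bond h : X j → X i` for `i ≤ j`. -/
structure MetInvSeq (X : ℕ → Type) [∀ i, MetricSpace (X i)] : Type where
  bond : ∀ ⦃i j : ℕ⦄, i ≤ j → X j → X i
  bond_refl : ∀ i (x : X i), bond (le_refl i) x = x
  bond_comp : ∀ ⦃i j k : ℕ⦄ (hij : i ≤ j) (hjk : j ≤ k) (x : X k),
    bond (hij.trans hjk) x = bond hij (bond hjk x)

/-!
Fix `i` and `ε`. For each level `l` let `δ l` be a common modulus of uniform continuity, for the
tolerance `ε / 2 ^ (l + 2)`, of the finitely many maps `X l → X m`, `m ≤ l`, and choose levels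
`K l`, monotone in `l`, beyond which the images in `X l` are stable up to `δ l`. Starting from the
image of `x` in `X (K i)`, stability yields points `u l ∈ X (K l)` whose images in consecutive
levels agree up to errors that sum geometrically in every `X m`. The projections to each `X m` are
then Cauchy, and their limits form a thread within `ε / 2` of the image of `x` in `X i`.
-/

lemma exists_pos_forall_dist_lt_of_uniformContinuous {α ι : Type*} [PseudoMetricSpace α]
    [Fintype ι] {Y : ι → Type*} [∀ m, PseudoMetricSpace (Y m)] {f : ∀ m, α → Y m}
    (hf : ∀ m, UniformContinuous (f m)) {η : ℝ} (hη : 0 < η) :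
    ∃ δ > 0, ∀ a b : α, dist a b < δ → ∀ m, dist (f m a) (f m b) < η := by
  obtain ⟨δ, hδ, hclose⟩ := Metric.uniformContinuous_iff.1
    (uniformContinuous_pi.2 hf : UniformContinuous fun a m => f m a) η hη
  exact ⟨δ, hδ, fun a b hab => (dist_pi_lt_iff hη).1 (hclose hab)⟩

namespace MetInvSeq

variable {X : ℕ → Type} [∀ i, MetricSpace (X i)] (S : MetInvSeq X)

abbrev Limit : Type := {g : ∀ i, X i // ∀ i, S.bond (Nat.le_succ i) (g (i + 1)) = g i}

/-- `fᵏᵢ(X_k)` lies in the `η`-neighborhood of `fʲᵢ(X_j)` for every `j ≥ k`; the sequence is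
Cauchy when such a `k` exists for all `i` and `η > 0`. -/
def ImagesClose (i k : ℕ) (η : ℝ) : Prop :=
  ∃ hik : i ≤ k, ∀ j (hkj : k ≤ j), ∀ x : X k, ∃ y : X j,
    dist (S.bond hik x) (S.bond (hik.trans hkj) y) < η

variable {S}

lemma bond_congr {y : ∀ n, X n} {m a b : ℕ} (hab : a = b) (ha : m ≤ a) (hb : m ≤ b) :
    S.bond ha (y a) = S.bond hb (y b) := by
  subst hab; rfl

lemma ImagesClose.mono {i k k' : ℕ} {η : ℝ} (h : S.ImagesClose i k η) (hkk' : k ≤ k') :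
    S.ImagesClose i k' η := by
  obtain ⟨hik, hclose⟩ := h
  refine ⟨hik.trans hkk', fun j hj x => ?_⟩
  obtain ⟨y, hy⟩ := hclose j (hkk'.trans hj) (S.bond hkk' x)
  exact ⟨y, by rw [S.bond_comp hik hkk' x]; exact hy⟩

lemma exists_monotone_imagesClose {δ : ℕ → ℝ} (h : ∀ l, ∃ k, S.ImagesClose l k (δ l)) :
    ∃ K : ℕ → ℕ, Monotone K ∧ ∀ l, S.ImagesClose l (K l) (δ l) := by
  choose K₀ hK₀ using h
  refine ⟨fun l => (Finset.range (l + 1)).sup K₀, fun a b hab => ?_, fun l => ?_⟩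
  · exact Finset.sup_mono (Finset.range_subset_range.2 (by omega))
  · exact (hK₀ l).mono (Finset.le_sup (by simp))

lemma exists_nearly_compatible_seq {K : ℕ → ℕ} (hK : Monotone K) {δ : ℕ → ℝ}
    (hδ : ∀ l, 0 < δ l) (hclose : ∀ l, S.ImagesClose l (K l) (δ l)) (i : ℕ) (x : X (K i)) :
    ∃ u : ∀ l, X (K l), u i = x ∧ ∀ l,
      dist (S.bond (hclose l).1 (u l)) (S.bond ((hclose l).1.trans (hK l.le_succ)) (u (l + 1)))
        < δ l := by
  choose f hf using fun l (a : X (K l)) => (hclose l).2 (K (l + 1)) (hK l.le_succ) a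
  let u : ∀ l, X (K l) := fun l => Nat.rec (motive := fun l => X (K l))
    (S.bond (hK (Nat.zero_le i)) x) (fun l a => if h : l + 1 ≤ i then S.bond (hK h) x else f l a) l
  have hu_le : ∀ l (h : l ≤ i), u l = S.bond (hK h) x
    | 0, _ => rfl
    | l + 1, h => dif_pos h
  have hu_succ : ∀ l, i ≤ l → u (l + 1) = f l (u l) := fun l hl => dif_neg (by omega)
  refine ⟨u, by rw [hu_le i le_rfl, S.bond_refl], fun l => ?_⟩
  rcases lt_or_ge l i with hl | hl
  · rw [hu_le l hl.le, hu_le (l + 1) hl, ← S.bond_comp, ← S.bond_comp, dist_self]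
    exact hδ l
  · rw [hu_succ l hl]
    exact hf l (u l)

variable [∀ i, CompleteSpace (X i)]

lemma exists_limit_dist_le (hcont : ∀ m, Continuous (S.bond (Nat.le_succ m)))
    (y : ∀ n, X n) (C : ℝ)
    (hy : ∀ n m (hm : m ≤ n),
      dist (S.bond hm (y n)) (S.bond (hm.trans n.le_succ) (y (n + 1))) ≤ C / 2 / 2 ^ n) :
    ∃ g : S.Limit, ∀ m, dist (y m) (g.1 m) ≤ C / 2 ^ m := by
  let s : ∀ m, ℕ → X m := fun m n => S.bond (Nat.le_add_right m n) (y (m + n))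
  have hs : ∀ m n, dist (s m n) (s m (n + 1)) ≤ C / 2 ^ m / 2 / 2 ^ n := fun m n => by
    convert hy (m + n) m (Nat.le_add_right m n) using 1
    · rfl
    · rw [pow_add]; ring
  choose g hg using fun m => cauchySeq_tendsto_of_complete (cauchySeq_of_le_geometric_two (hs m))
  refine ⟨⟨g, fun m => tendsto_nhds_unique ?_ ((hg m).comp (Filter.tendsto_add_atTop_nat 1))⟩,
    fun m => ?_⟩
  · refine (((hcont m).tendsto _).comp (hg (m + 1))).congr fun n => ?_
    simp only [Function.comp_apply, s, ← S.bond_comp]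
    exact bond_congr (by omega) _ _
  · simpa [s, S.bond_refl] using dist_le_of_le_geometric_two_of_tendsto₀ (hs m) (hg m)

lemma exists_limit_dist_bond_lt (huc : ∀ ⦃i j : ℕ⦄ (h : i ≤ j), UniformContinuous (S.bond h))
    (hcauchy : ∀ i (ε : ℝ), 0 < ε → ∃ k, S.ImagesClose i k ε) (i : ℕ) {ε : ℝ} (hε : 0 < ε) :
    ∃ N, ∀ j, N ≤ j → ∀ (hij : i ≤ j) (x : X j),
      ∃ g : S.Limit, dist (S.bond hij x) (g.1 i) < ε := by
  obtain ⟨δ, hδ, hmod⟩ : ∃ δ : ℕ → ℝ, (∀ l, 0 < δ l) ∧ ∀ l (a b : X l), dist a b < δ l →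
      ∀ m (hm : m ≤ l), dist (S.bond hm a) (S.bond hm b) < ε / 2 / 2 / 2 ^ l := by
    choose δ hδ hmod using fun l => exists_pos_forall_dist_lt_of_uniformContinuous
      (f := fun m : Fin (l + 1) => S.bond (Nat.lt_succ_iff.1 m.2)) (fun m => huc _)
      (by positivity : 0 < ε / 2 / 2 / 2 ^ l)
    exact ⟨δ, hδ, fun l a b hab m hm => hmod l a b hab ⟨m, Nat.lt_succ_of_le hm⟩⟩
  obtain ⟨K, hK_mono, hK⟩ := exists_monotone_imagesClose fun l => hcauchy l (δ l) (hδ l)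
  refine ⟨K i, fun j hj hij x => ?_⟩
  obtain ⟨u, hu_i, hu⟩ := exists_nearly_compatible_seq hK_mono hδ hK i (S.bond hj x)
  obtain ⟨g, hg⟩ := exists_limit_dist_le (fun m => (huc _).continuous)
    (fun l => S.bond (hK l).1 (u l)) (ε / 2) fun n m hm => by
      rw [← S.bond_comp (hm.trans n.le_succ), S.bond_comp hm ((hK n).1.trans (hK_mono n.le_succ))]
      exact (hmod n _ _ (hu n) m hm).le
  have hgi := hg i
  rw [hu_i, ← S.bond_comp] at hgi
  have : ε / 2 / 2 ^ i ≤ ε / 2 := div_le_self (by positivity) (one_le_pow₀ one_le_two)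
  exact ⟨g, by linarith⟩

end MetInvSeq

theorem converges_of_cauchy
    {X : ℕ → Type} [∀ i, MetricSpace (X i)] [∀ i, CompleteSpace (X i)]
    (S : MetInvSeq X)
    (huc : ∀ ⦃i j : ℕ⦄ (h : i ≤ j), UniformContinuous (S.bond h))
    (hcauchy : ∀ i (ε : ℝ), 0 < ε → ∃ k, ∃ hik : i ≤ k, ∀ j (hkj : k ≤ j),
      ∀ x : X k, ∃ y : X j,
        dist (S.bond hik x) (S.bond (hik.trans hkj) y) < ε) :
    (∀ i (ε : ℝ), 0 < ε → ∃ N, ∀ j (_ : N ≤ j) (hij : i ≤ j), ∀ x : X j,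
      ∃ g : {g : ∀ i, X i // ∀ i, S.bond (Nat.le_succ i) (g (i + 1)) = g i},
        dist (S.bond hij x) (g.1 i) < ε) ∧
    ((∀ i, Nonempty (X i)) →
      Nonempty {g : ∀ i, X i // ∀ i, S.bond (Nat.le_succ i) (g (i + 1)) = g i}) := by
  have hnear := fun i (ε : ℝ) (hε : 0 < ε) => S.exists_limit_dist_bond_lt huc hcauchy i hε
  refine ⟨hnear, fun hne => ?_⟩
  obtain ⟨N, hN⟩ := hnear 0 1 one_pos
  obtain ⟨g, -⟩ := hN N le_rfl N.zero_le (Classical.choice (hne N))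
  exact ⟨g⟩
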